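/- arXiv:2306.09276 — 4 statements merged into one kernel-verified Lean document; each statement's English description precedes it below -/
import Mathlib

section
/- A corner-connection knot mosaic of size 2 (a 2-mosaic) contains no four-connection-point tiles; in particular, a 2-mosaic cannot contain a crossing tile. -/
/-- The eleven corner-connection tile types. -/
inductive Tile : Type
  | T0 | T1 | T2 | T3 | T4 | T5 | T6 | T7 | T8 | T9 | T10
  deriving DecidableEq

open Tile

/-- `cp t a b = true` iff tile `t` has a connection point at the corner of its cell
with vertical offset `a` (`false` = top, `true` = bottom) and horizontal offset `b`
(`false` = left, `true` = right).  `T0` is blank; `T1`–`T4` are the single-arc tiles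
(connection points at the two corners of one side, the four sides in order top,
bottom, left, right); `T5`, `T6` are the diagonal segment tiles ({TL, BR} and
{TR, BL}); `T7`–`T10` (double arcs and crossings) use all four corners. -/
def cp : Tile → Bool → Bool → Bool
  | T0, _, _ => false
  | T1, a, _ => !a
  | T2, a, _ => a
  | T3, _, b => !b
  | T4, _, b => b
  | T5, a, b => a == b
  | T6, a, b => a != b
  | _, _, _ => true

/-- Crossing tiles. -/
def isCrossing : Tile → Bool
  | T9 | T10 => true
  | _ => false

/-- Tiles with four connection points. -/
def isFourCP : Tile → Bool
  | T7 | T8 | T9 | T10 => true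
  | _ => false

/-- Double-arc tiles. -/
def isDoubleArc : Tile → Bool
  | T7 | T8 => true
  | _ => false

/-- The number of connection-point incidences at the grid vertex `(r, c)`:
the number of cells incident to this vertex whose tile has a connection point
at the corresponding corner.  (The cell incident to `(r, c)` via its corner
with offsets `(a, b)` is the cell `(r - a, c - b)`, which exists iff `a ≤ r`
and `b ≤ c`.) -/
def vertexCount (M : ℕ → ℕ → Tile) (r c : ℕ) : ℕ :=
  ∑ p : Bool × Bool,
    if p.1.toNat ≤ r ∧ p.2.toNat ≤ c ∧
        cp (M (r - p.1.toNat) (c - p.2.toNat)) p.1 p.2 = true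
    then 1 else 0

/-- A corner-connection knot mosaic with `m` rows and `n` columns: a tiling of the
`m × n` grid (cells outside the grid are blank) that is suitably connected with no
triple points, i.e. every vertex of the `(m+1) × (n+1)` grid of cell corners has
exactly 0 or 2 connection-point incidences. -/
def IsKnotMosaicRect (m n : ℕ) (M : ℕ → ℕ → Tile) : Prop :=
  (∀ i j, m ≤ i ∨ n ≤ j → M i j = Tile.T0) ∧
  (∀ r c, r ≤ m → c ≤ n → vertexCount M r c = 0 ∨ vertexCount M r c = 2)

/-- A corner-connection knot `n`-mosaic (square, `n` rows and `n` columns). -/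
def IsKnotMosaic (n : ℕ) (M : ℕ → ℕ → Tile) : Prop :=
  IsKnotMosaicRect n n M

/-- The number of crossing tiles in the `m × n` grid. -/
def crossingCountRect (m n : ℕ) (M : ℕ → ℕ → Tile) : ℕ :=
  ((Finset.range m ×ˢ Finset.range n).filter
    (fun p => isCrossing (M p.1 p.2) = true)).card

/-- The number of crossing tiles in the `n × n` grid. -/
def crossingCount (n : ℕ) (M : ℕ → ℕ → Tile) : ℕ :=
  crossingCountRect n n M

/-!
At an outer corner of the grid of cell corners only one cell of the mosaic is incident, so at
most one connection point meets there; since the count must be `0` or `2`, it is `0`. Hence each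
corner tile of a knot mosaic misses a connection point at its outer corner. In a
`2`-mosaic every tile is a corner tile.
-/

theorem isFourCP_eq_false_of_cp_eq_false {t : Tile} {a b : Bool} (h : cp t a b = false) :
    isFourCP t = false := by
  cases t <;> cases a <;> cases b <;> simp_all [cp, isFourCP]

theorem isCrossing_eq_false_of_isFourCP_eq_false {t : Tile} (h : isFourCP t = false) :
    isCrossing t = false := by
  cases t <;> simp_all [isFourCP, isCrossing]

theorem cp_eq_false_of_vertexCount_eq_zero {M : ℕ → ℕ → Tile} {r c : ℕ}
    (h : vertexCount M r c = 0) {a b : Bool} (ha : a.toNat ≤ r) (hb : b.toNat ≤ c) :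
    cp (M (r - a.toNat) (c - b.toNat)) a b = false := by
  have hab := (Finset.sum_eq_zero_iff.mp h) (a, b) (Finset.mem_univ _)
  simpa [ha, hb] using hab

namespace IsKnotMosaicRect

variable {m n : ℕ} {M : ℕ → ℕ → Tile}

theorem vertexCount_corner_le_one (hM : IsKnotMosaicRect m n M) (a b : Bool) :
    vertexCount M (bif a then m else 0) (bif b then n else 0) ≤ 1 := by
  unfold vertexCount
  rw [Finset.sum_eq_single (a, b)]
  · split_ifs <;> simp
  · rintro ⟨a', b'⟩ - hne
    have hblank : ∀ j, M m j = Tile.T0 ∧ M j n = Tile.T0 :=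
      fun j => ⟨hM.1 m j (Or.inl le_rfl), hM.1 j n (Or.inr le_rfl)⟩
    cases a <;> cases b <;> cases a' <;> cases b' <;> simp_all [cp]
  · simp

theorem cp_corner_eq_false (hM : IsKnotMosaicRect m n M) (hm : 1 ≤ m) (hn : 1 ≤ n)
    (a b : Bool) :
    cp (M (bif a then m - 1 else 0) (bif b then n - 1 else 0)) a b = false := by
  have hzero : vertexCount M (bif a then m else 0) (bif b then n else 0) = 0 := by
    have h2 := hM.2 (bif a then m else 0) (bif b then n else 0)
      (by cases a <;> simp) (by cases b <;> simp)
    have h1 := hM.vertexCount_corner_le_one a b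
    omega
  have hcorner := cp_eq_false_of_vertexCount_eq_zero hzero (a := a) (b := b)
    (by cases a <;> simp [hm]) (by cases b <;> simp [hn])
  cases a <;> cases b <;> simpa using hcorner

end IsKnotMosaicRect

/-- A corner-connection knot 2-mosaic contains no four-connection-point tiles;
in particular, it contains no crossing tile. -/
theorem two_mosaic_no_fourCP
    (M : ℕ → ℕ → Tile) (hM : IsKnotMosaic 2 M) :
    ∀ i j, i < 2 → j < 2 →
      isFourCP (M i j) = false ∧ isCrossing (M i j) = false := by
  intro i j hi hj
  obtain ⟨a, rfl⟩ : ∃ a : Bool, (bif a then 1 else 0) = i := ⟨i == 1, by interval_cases i <;> rfl⟩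
  obtain ⟨b, rfl⟩ : ∃ b : Bool, (bif b then 1 else 0) = j := ⟨j == 1, by interval_cases j <;> rfl⟩
  have hfour := isFourCP_eq_false_of_cp_eq_false
    (IsKnotMosaicRect.cp_corner_eq_false hM one_le_two one_le_two a b)
  exact ⟨hfour, isCrossing_eq_false_of_isFourCP_eq_false hfour⟩
end

section
/- A corner-connection knot mosaic of size 3 (a 3-mosaic) contains at most 4 crossing tiles. -/
open Tile

/-!
A four-connection-point tile in a corner cell would leave the outer corner vertex of the grid
with a single incidence, so the crossings of a 3-mosaic lie in the five cells of the central
plus. They cannot fill all five: the crossings at `(0, 1)`, `(1, 0)` and `(1, 1)` would give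
the central vertex `(1, 1)` at least three incidences.
-/

section vertexCount

variable (M : ℕ → ℕ → Tile) (r c : ℕ)

lemma vertexCount_zero_zero : vertexCount M 0 0 = (cp (M 0 0) false false).toNat := by
  simp only [vertexCount, Fintype.sum_prod_type, Fintype.sum_bool, Bool.toNat_true,
    Bool.toNat_false]
  simp [Bool.toNat, Bool.cond_eq_ite]

lemma vertexCount_zero_succ :
    vertexCount M 0 (c + 1) =
      (cp (M 0 c) false true).toNat + (cp (M 0 (c + 1)) false false).toNat := by
  simp only [vertexCount, Fintype.sum_prod_type, Fintype.sum_bool, Bool.toNat_true,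
    Bool.toNat_false]
  simp [Bool.toNat, Bool.cond_eq_ite]

lemma vertexCount_succ_zero :
    vertexCount M (r + 1) 0 =
      (cp (M r 0) true false).toNat + (cp (M (r + 1) 0) false false).toNat := by
  simp only [vertexCount, Fintype.sum_prod_type, Fintype.sum_bool, Bool.toNat_true,
    Bool.toNat_false]
  simp [Bool.toNat, Bool.cond_eq_ite]

lemma vertexCount_succ_succ :
    vertexCount M (r + 1) (c + 1) =
      (cp (M r c) true true).toNat + (cp (M r (c + 1)) true false).toNat +
        (cp (M (r + 1) c) false true).toNat + (cp (M (r + 1) (c + 1)) false false).toNat := by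
  simp only [vertexCount, Fintype.sum_prod_type, Fintype.sum_bool, Bool.toNat_true,
    Bool.toNat_false]
  simp [Bool.toNat, Bool.cond_eq_ite, add_assoc]

end vertexCount

lemma cp_of_isFourCP {t : Tile} (h : isFourCP t = true) (a b : Bool) : cp t a b = true := by
  cases t <;> cases a <;> cases b <;> simp_all [isFourCP, cp]

lemma isFourCP_of_isCrossing {t : Tile} (h : isCrossing t = true) : isFourCP t = true := by
  cases t <;> simp_all [isCrossing, isFourCP]

lemma isFourCP_eq_false_of_vertexCount_eq {M : ℕ → ℕ → Tile} {r c : ℕ} {t : Tile} {a b : Bool}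
    (hv : vertexCount M r c = 0 ∨ vertexCount M r c = 2)
    (h : vertexCount M r c = (cp t a b).toNat) : isFourCP t = false := by
  by_contra hfour
  rw [h, cp_of_isFourCP (Bool.not_eq_false _ ▸ hfour)] at hv
  simp at hv

namespace IsKnotMosaicRect

variable {m n : ℕ} {M : ℕ → ℕ → Tile}

lemma isFourCP_corner_eq_false (hM : IsKnotMosaicRect (m + 1) (n + 1) M) {i j : ℕ}
    (hi : i = 0 ∨ i = m) (hj : j = 0 ∨ j = n) : isFourCP (M i j) = false := by
  have blank_row : ∀ j, M (m + 1) j = T0 := fun j => hM.1 _ j (Or.inl le_rfl)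
  have blank_col : ∀ i, M i (n + 1) = T0 := fun i => hM.1 i _ (Or.inr le_rfl)
  rcases hi with hi | hi <;> rcases hj with hj | hj <;> subst i j
  · exact isFourCP_eq_false_of_vertexCount_eq (hM.2 0 0 (by omega) (by omega))
      (vertexCount_zero_zero M)
  · exact isFourCP_eq_false_of_vertexCount_eq (hM.2 0 (n + 1) (by omega) le_rfl)
      (by simp only [vertexCount_zero_succ, blank_col]; rfl)
  · exact isFourCP_eq_false_of_vertexCount_eq (hM.2 (m + 1) 0 le_rfl (by omega))
      (by simp only [vertexCount_succ_zero, blank_row]; rfl)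
  · exact isFourCP_eq_false_of_vertexCount_eq (hM.2 (m + 1) (n + 1) le_rfl le_rfl)
      (by simp only [vertexCount_succ_succ, blank_row, blank_col]; rfl)

lemma not_isFourCP_three_around_vertex (hM : IsKnotMosaicRect m n M) {r c : ℕ}
    (hr : r + 1 ≤ m) (hc : c + 1 ≤ n) (h₁ : isFourCP (M r (c + 1)))
    (h₂ : isFourCP (M (r + 1) c)) (h₃ : isFourCP (M (r + 1) (c + 1))) : False := by
  have hv := hM.2 (r + 1) (c + 1) hr hc
  rw [vertexCount_succ_succ, cp_of_isFourCP h₁, cp_of_isFourCP h₂, cp_of_isFourCP h₃] at hv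
  simp at hv

end IsKnotMosaicRect

/-- A corner-connection knot 3-mosaic contains at most 4 crossing tiles. -/
theorem three_mosaic_at_most_four_crossings
    (M : ℕ → ℕ → Tile) (hM : IsKnotMosaic 3 M) :
    crossingCount 3 M ≤ 4 := by
  set s := (Finset.range 3 ×ˢ Finset.range 3).filter (fun p => isCrossing (M p.1 p.2) = true)
  set plus : Finset (ℕ × ℕ) := {(0, 1), (1, 0), (1, 1), (1, 2), (2, 1)}
  have hfour : ∀ p ∈ s, isFourCP (M p.1 p.2) = true := fun p hp =>
    isFourCP_of_isCrossing (Finset.mem_filter.1 hp).2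
  have hsub : s ⊆ plus := by
    rintro ⟨i, j⟩ hp
    have hcorner := @IsKnotMosaicRect.isFourCP_corner_eq_false 2 2 M hM i j
    have hij := hfour _ hp
    simp only [s, Finset.mem_filter, Finset.mem_product, Finset.mem_range] at hp
    obtain ⟨⟨hi, hj⟩, -⟩ := hp
    interval_cases i <;> interval_cases j <;> simp_all [plus]
  have hne : s ≠ plus := by
    intro h
    have hmem : ∀ p ∈ plus, isFourCP (M p.1 p.2) = true := h ▸ hfour
    exact IsKnotMosaicRect.not_isFourCP_three_around_vertex hM (r := 0) (c := 0)
      (by norm_num) (by norm_num)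
      (hmem (0, 1) (by simp [plus])) (hmem (1, 0) (by simp [plus])) (hmem (1, 1) (by simp [plus]))
  have hlt : s.card < plus.card := Finset.card_lt_card (Finset.ssubset_iff_subset_ne.2 ⟨hsub, hne⟩)
  exact Nat.le_of_lt_succ hlt
end

section
/- For any even n ≥ 3, the number of crossing tiles in a corner-connection knot mosaic of size n is at most n²/2. -/
open Tile

/-!
Cut the `2a × 2b` grid into `a · b` blocks of `2 × 2` cells. The four cells of a block all
meet at its centre, a vertex with at most two connection-point incidences, and a crossing
tile has a connection point at every corner; so each block holds at most two crossings.
-/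

lemma cp_of_isCrossing {t : Tile} (h : isCrossing t = true) (a b : Bool) :
    cp t a b = true := by
  cases t <;> simp_all [isCrossing, cp]

lemma Finset.sum_range_two_mul {M : Type*} [AddCommMonoid M] (f : ℕ → M) (m : ℕ) :
    ∑ i ∈ Finset.range (2 * m), f i = ∑ k ∈ Finset.range m, (f (2 * k) + f (2 * k + 1)) := by
  induction m with
  | zero => simp
  | succ m ih =>
    rw [Nat.mul_succ, Finset.sum_range_succ, Finset.sum_range_succ, ih, Finset.sum_range_succ,
      add_assoc]

lemma crossingCountRect_eq_sum (m n : ℕ) (M : ℕ → ℕ → Tile) :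
    crossingCountRect m n M =
      ∑ i ∈ Finset.range m, ∑ j ∈ Finset.range n, if isCrossing (M i j) then 1 else 0 := by
  rw [crossingCountRect, Finset.card_filter, Finset.sum_product]

lemma crossings_around_vertex_le_vertexCount (M : ℕ → ℕ → Tile) (r c : ℕ) :
    ((if isCrossing (M r c) then 1 else 0) + (if isCrossing (M r (c + 1)) then 1 else 0)) +
      ((if isCrossing (M (r + 1) c) then 1 else 0) +
        (if isCrossing (M (r + 1) (c + 1)) then 1 else 0)) ≤ vertexCount M (r + 1) (c + 1) := by
  have term_le : ∀ (i j : ℕ) (a b : Bool),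
      (if isCrossing (M i j) then 1 else 0) ≤ if cp (M i j) a b then 1 else 0 := by
    intro i j a b
    by_cases h : isCrossing (M i j) <;> simp [h, cp_of_isCrossing]
  simp only [vertexCount, Fintype.sum_prod_type, Fintype.sum_bool, Bool.toNat_true,
    Bool.toNat_false, Nat.add_sub_cancel, Nat.sub_zero, Nat.le_add_left, zero_le, true_and]
  exact add_le_add (add_le_add (term_le ..) (term_le ..)) (add_le_add (term_le ..) (term_le ..))

lemma IsKnotMosaicRect.vertexCount_le_two {m n : ℕ} {M : ℕ → ℕ → Tile}
    (hM : IsKnotMosaicRect m n M) {r c : ℕ} (hr : r ≤ m) (hc : c ≤ n) :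
    vertexCount M r c ≤ 2 := by
  rcases hM.2 r c hr hc with h | h <;> omega

lemma IsKnotMosaicRect.crossingCountRect_le {a b : ℕ} {M : ℕ → ℕ → Tile}
    (hM : IsKnotMosaicRect (2 * a) (2 * b) M) :
    crossingCountRect (2 * a) (2 * b) M ≤ 2 * (a * b) :=
  calc crossingCountRect (2 * a) (2 * b) M
      = ∑ k ∈ Finset.range a, ∑ l ∈ Finset.range b,
          (((if isCrossing (M (2 * k) (2 * l)) then 1 else 0) +
              (if isCrossing (M (2 * k) (2 * l + 1)) then 1 else 0)) +
            ((if isCrossing (M (2 * k + 1) (2 * l)) then 1 else 0) +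
              (if isCrossing (M (2 * k + 1) (2 * l + 1)) then 1 else 0))) := by
        simp only [crossingCountRect_eq_sum, Finset.sum_range_two_mul, Finset.sum_add_distrib]
        exact add_add_add_comm ..
    _ ≤ ∑ k ∈ Finset.range a, ∑ l ∈ Finset.range b, vertexCount M (2 * k + 1) (2 * l + 1) :=
        Finset.sum_le_sum fun k _ => Finset.sum_le_sum fun l _ =>
          crossings_around_vertex_le_vertexCount M (2 * k) (2 * l)
    _ ≤ ∑ _k ∈ Finset.range a, ∑ _l ∈ Finset.range b, 2 := by
        gcongr with k hk l hl
        exact hM.vertexCount_le_two (by linarith [Finset.mem_range.mp hk])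
          (by linarith [Finset.mem_range.mp hl])
    _ = 2 * (a * b) := by simp only [Finset.sum_const, Finset.card_range, smul_eq_mul]; ring

theorem max_crossings_even_general
    (n : ℕ) (hpar : Even n)
    (M : ℕ → ℕ → Tile) (hM : IsKnotMosaic n M) :
    crossingCount n M ≤ n ^ 2 / 2 := by
  obtain ⟨m, rfl⟩ : 2 ∣ n := hpar.two_dvd
  calc crossingCount (2 * m) M ≤ 2 * (m * m) := hM.crossingCountRect_le
    _ = (2 * m) ^ 2 / 2 := by
        rw [show (2 * m) ^ 2 = 2 * (2 * (m * m)) by ring, Nat.mul_div_cancel_left _ two_pos]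

/-- For any even `n ≥ 3`, a corner-connection knot `n`-mosaic has at most `n² / 2`
crossing tiles. -/
theorem max_crossings_even
    (n : ℕ) (hn : 3 ≤ n) (hpar : Even n)
    (M : ℕ → ℕ → Tile) (hM : IsKnotMosaic n M) :
    crossingCount n M ≤ n ^ 2 / 2 :=
  max_crossings_even_general n hpar M hM
end

section
/- Let n ≥ 3 and let S be a set of cells of the n × n grid {0,…,n−1} × {0,…,n−1} such that (a) every 2×2 window of the grid (the four cells {i,i+1} × {j,j+1} for 0 ≤ i,j ≤ n−2) contains at most two cells of S, and (b) none of the four corner cells (0,0), (0,n−1), (n−1,0), (n−1,n−1) belongs to S. If n is even then |S| ≤ n²/2, and if n is odd then |S| ≤ (n² + n − 4)/2. -/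
/-!
For even `n = 2k` the grid is tiled by `k²` disjoint windows, each holding at most two cells
of `S`. For odd `n = 2k + 1` the cells off the antidiagonal `r + c = 2k`, together with the
antidiagonal cells in odd rows, are covered by `k(k + 1)` windows: a staircase of windows with
even corners above the antidiagonal and one with odd rows below it. What is left are the
`k + 1` antidiagonal cells in even rows, two of which are corners, so
`|S| ≤ 2k(k + 1) + (k - 1) = (n² + n - 4) / 2`.
-/

open Finset

theorem card_le_mul_add_of_subset_biUnion_union {α ι : Type*} [DecidableEq α]
    {S R : Finset α} {I : Finset ι} {P : ι → Finset α} {b : ℕ}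
    (hS : S ⊆ I.biUnion P ∪ R) (hb : ∀ t ∈ I, #(S ∩ P t) ≤ b) :
    #S ≤ #I * b + #(S ∩ R) := by
  calc #S = #(I.biUnion (fun t => S ∩ P t) ∪ S ∩ R) := by
        rw [← inter_biUnion, ← inter_union_distrib_left, inter_eq_left.mpr hS]
    _ ≤ #(I.biUnion fun t => S ∩ P t) + #(S ∩ R) := card_union_le _ _
    _ ≤ #I * b + #(S ∩ R) := by grw [card_biUnion_le_card_mul _ _ _ hb]

def window (p : ℕ × ℕ) : Finset (ℕ × ℕ) :=
  {p.1, p.1 + 1} ×ˢ {p.2, p.2 + 1}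

@[simp]
theorem mem_window {p q : ℕ × ℕ} :
    q ∈ window p ↔ (q.1 = p.1 ∨ q.1 = p.1 + 1) ∧ (q.2 = p.2 ∨ q.2 = p.2 + 1) := by
  simp [window]

section Grid

variable {S : Finset (ℕ × ℕ)}

theorem card_le_of_even (k : ℕ) (hsub : S ⊆ range (k + k) ×ˢ range (k + k))
    (hwin : ∀ p : ℕ × ℕ, p.1 + 2 ≤ k + k → p.2 + 2 ≤ k + k → #(S ∩ window p) ≤ 2) :
    #S ≤ 2 * (k * k) := by
  have hcover : S ⊆ (range k ×ˢ range k).biUnion (fun t => window (2 * t.1, 2 * t.2)) ∪ ∅ := by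
    intro p hp
    have hp' := hsub hp
    simp only [mem_product, mem_range] at hp'
    simp only [union_empty, mem_biUnion, mem_product, mem_range, mem_window]
    exact ⟨(p.1 / 2, p.2 / 2), by omega, by omega⟩
  have hbound := card_le_mul_add_of_subset_biUnion_union hcover fun t ht => by
    simp only [mem_product, mem_range] at ht
    exact hwin _ (by omega) (by omega)
  simpa [mul_comm] using hbound

/-- The row pair indexed by `t.1` receives `k - t.1` windows above the antidiagonal and
`t.1 + 1` below it, so `range k ×ˢ range (k + 1)` indexes the whole staircase. -/
def staircaseCorner (k : ℕ) (t : ℕ × ℕ) : ℕ × ℕ :=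
  if t.1 + t.2 < k then (2 * t.1, 2 * t.2) else (2 * t.1 + 1, 2 * t.2 - 1)

theorem staircaseCorner_add_two_le {k : ℕ} {t : ℕ × ℕ} (ht : t ∈ range k ×ˢ range (k + 1)) :
    (staircaseCorner k t).1 + 2 ≤ 2 * k + 1 ∧ (staircaseCorner k t).2 + 2 ≤ 2 * k + 1 := by
  simp only [mem_product, mem_range] at ht
  unfold staircaseCorner
  split_ifs <;> dsimp only <;> omega

theorem exists_mem_window_staircaseCorner {k r c : ℕ} (hr : r < 2 * k + 1) (hc : c < 2 * k + 1)
    (hoff : r % 2 = 1 ∨ r + c ≠ 2 * k) :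
    ∃ t ∈ range k ×ˢ range (k + 1), (r, c) ∈ window (staircaseCorner k t) := by
  simp only [mem_product, mem_range, mem_window, staircaseCorner]
  by_cases habove : r + c < 2 * k ∨ r % 2 = 1 ∧ r + c = 2 * k
  · refine ⟨(r / 2, c / 2), by omega, ?_⟩
    rw [if_pos (by omega)]
    omega
  · refine ⟨((r - 1) / 2, (c + 1) / 2), by omega, ?_⟩
    rw [if_neg (by omega)]
    omega

def antidiagonalInterior (k : ℕ) : Finset (ℕ × ℕ) :=
  (Icc 1 (k - 1)).image fun i => (2 * i, 2 * (k - i))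

theorem card_antidiagonalInterior_le (k : ℕ) : #(antidiagonalInterior k) ≤ k - 1 :=
  card_image_le.trans (by simp)

theorem card_le_of_odd (k : ℕ) (hsub : S ⊆ range (2 * k + 1) ×ˢ range (2 * k + 1))
    (hwin : ∀ p : ℕ × ℕ, p.1 + 2 ≤ 2 * k + 1 → p.2 + 2 ≤ 2 * k + 1 → #(S ∩ window p) ≤ 2)
    (hc01 : (0, 2 * k) ∉ S) (hc10 : (2 * k, 0) ∉ S) :
    #S ≤ 2 * (k * (k + 1)) + (k - 1) := by
  have hcover : S ⊆ (range k ×ˢ range (k + 1)).biUnion (window ∘ staircaseCorner k) ∪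
      antidiagonalInterior k := by
    rintro ⟨r, c⟩ hp
    have hrc := hsub hp
    simp only [mem_product, mem_range] at hrc
    by_cases hoff : r % 2 = 1 ∨ r + c ≠ 2 * k
    · obtain ⟨t, ht, hmem⟩ := exists_mem_window_staircaseCorner hrc.1 hrc.2 hoff
      exact mem_union_left _ (mem_biUnion.mpr ⟨t, ht, hmem⟩)
    · have hr0 : r ≠ 0 := by rintro rfl; exact hc01 (by rwa [show c = 2 * k by omega] at hp)
      have hc0 : c ≠ 0 := by rintro rfl; exact hc10 (by rwa [show r = 2 * k by omega] at hp)
      refine mem_union_right _ (mem_image.mpr ⟨r / 2, mem_Icc.mpr ⟨by omega, by omega⟩, ?_⟩)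
      simp only [Prod.mk.injEq]
      omega
  have hbound := card_le_mul_add_of_subset_biUnion_union hcover fun t ht =>
    hwin _ (staircaseCorner_add_two_le ht).1 (staircaseCorner_add_two_le ht).2
  grw [hbound, inter_subset_right, card_antidiagonalInterior_le, card_product, card_range,
    card_range]
  omega

end Grid

theorem window_bounded_set_card_bound_general
    (n : ℕ) (S : Finset (ℕ × ℕ))
    (hsub : S ⊆ Finset.range n ×ˢ Finset.range n)
    (hwin : ∀ i j, i + 2 ≤ n → j + 2 ≤ n →
      (S ∩ (({i, i + 1} : Finset ℕ) ×ˢ ({j, j + 1} : Finset ℕ))).card ≤ 2)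
    (hc01 : (0, n - 1) ∉ S)
    (hc10 : (n - 1, 0) ∉ S) :
    (Even n → S.card ≤ n ^ 2 / 2) ∧
    (Odd n → S.card ≤ (n ^ 2 + n - 4) / 2) := by
  have hwindow : ∀ p : ℕ × ℕ, p.1 + 2 ≤ n → p.2 + 2 ≤ n → #(S ∩ window p) ≤ 2 :=
    fun p => hwin p.1 p.2
  constructor
  · rintro ⟨k, rfl⟩
    have hcard := card_le_of_even k hsub hwindow
    have hsq : (k + k) ^ 2 = 4 * (k * k) := by ring
    omega
  · rintro ⟨k, rfl⟩
    have hcard := card_le_of_odd k hsub hwindow (by simpa using hc01) (by simpa using hc10)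
    rcases k.eq_zero_or_pos with rfl | hk
    · simpa using hcard
    have hsq : (2 * k + 1) ^ 2 = 4 * (k * (k + 1)) + 1 := by ring
    omega

/-- Let `n ≥ 3` and let `S` be a set of cells of the `n × n` grid such that every
`2 × 2` window of the grid contains at most two cells of `S` and none of the four
corner cells belongs to `S`.  If `n` is even then `|S| ≤ n² / 2`, and if `n` is odd
then `|S| ≤ (n² + n − 4) / 2`. -/
theorem window_bounded_set_card_bound
    (n : ℕ) (hn : 3 ≤ n) (S : Finset (ℕ × ℕ))
    (hsub : S ⊆ Finset.range n ×ˢ Finset.range n)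
    (hwin : ∀ i j, i + 2 ≤ n → j + 2 ≤ n →
      (S ∩ (({i, i + 1} : Finset ℕ) ×ˢ ({j, j + 1} : Finset ℕ))).card ≤ 2)
    (hc00 : (0, 0) ∉ S) (hc01 : (0, n - 1) ∉ S)
    (hc10 : (n - 1, 0) ∉ S) (hc11 : (n - 1, n - 1) ∉ S) :
    (Even n → S.card ≤ n ^ 2 / 2) ∧
    (Odd n → S.card ≤ (n ^ 2 + n - 4) / 2) :=
  window_bounded_set_card_bound_general n S hsub hwin hc01 hc10
end
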